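/- arXiv:1712.01344 — 3 statements merged into one kernel-verified Lean document; each statement's English description precedes it below -/
import Mathlib

section
/- Let r, τ, ω > 0 with ω > τ, let p, q > 0, let 0 < ν < 1, and let z ∈ (0,1). Then S_{2,ν,τ,ω}^{(2,1)}(r; {k}; p,q; z) = (1/(2irΓ(ν))) [ D_z^{ν−1}( z^{ν−1} Φ_{τ,ω}(z, 2, −ir; p,q) ) − D_z^{ν−1}( z^{ν−1} Φ_{τ,ω}(z, 2, ir; p,q) ) ], where for a function g on (0,1) the Riemann–Liouville fractional derivative of (negative) order ν − 1 is D_z^{ν−1} g(z) = (1/Γ(1−ν)) ∫₀^z (z−u)^{−ν} g(u) du. -/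
/-!
Expand `Φ(u, 2, a)` as a power series in `u`. Since `B_{p,q}(τ + n, ω - τ)` is bounded in `n`,
`|a + n| ≥ |a|` when `Re a ≥ 0`, and `Γ(ν + n) / n! ≤ Γ(ν)` for `ν ≤ 1`, the series of integrals
of absolute values converges geometrically for `z < 1`, so the Riemann–Liouville integral may be
taken termwise. On each monomial it is a beta integral:
`D^{ν-1}(u^{ν-1+n}) = Γ(ν + n) / n! · z^n`. Subtracting the two series and using the partial
fraction `1/(n - ir)² - 1/(n + ir)² = 4irn/(n² + r²)²` gives the series `S`, whose `n = 0` term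
vanishes.
-/

open Real MeasureTheory Set Filter

/-- Pochhammer symbol `(a)_n = Γ(a+n)/Γ(a)`. -/
noncomputable def poch (a : ℝ) (n : ℕ) : ℝ := Real.Gamma (a + n) / Real.Gamma a

/-- Euler beta function. -/
noncomputable def betaE (x y : ℝ) : ℝ := Real.Gamma x * Real.Gamma y / Real.Gamma (x + y)

/-- Extended beta function `B_{p,q}(x,y)`. -/
noncomputable def betaPQ (p q x y : ℝ) : ℝ :=
  ∫ t in Ioo (0:ℝ) 1, t ^ (x - 1) * (1 - t) ^ (y - 1) * Real.exp (-p / t - q / (1 - t))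

/-- Extended Hurwitz–Lerch zeta function `Φ_{τ,ω}(z,s,a;p,q)` (the case `λ = 1`),
with complex parameter `a` and principal powers. -/
noncomputable def hurwitzPhi (τ ω p q : ℝ) (z : ℝ) (s : ℂ) (a : ℂ) : ℂ :=
  ∑' n : ℕ, (betaPQ p q (τ + (n : ℝ)) (ω - τ) : ℂ) * (z : ℂ) ^ n /
    ((betaE τ (ω - τ) : ℂ) * (a + (n : ℂ)) ^ s)

/-- Riemann–Liouville fractional derivative of order `ν - 1` (with `0 < ν < 1`,
so of negative order) of a function `g` on `(0,1)`, evaluated at `z`. -/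
noncomputable def rlDeriv (ν : ℝ) (g : ℝ → ℂ) (z : ℝ) : ℂ :=
  (1 / (Real.Gamma (1 - ν) : ℂ)) *
    ∫ u in Ioo (0:ℝ) z, (((z - u) ^ (-ν) : ℝ) : ℂ) * g u

theorem exists_rpow_mul_exp_neg_div_le (α : ℝ) {p : ℝ} (hp : 0 < p) :
    ∃ M, ∀ t ∈ Ioo (0 : ℝ) 1, t ^ α * Real.exp (-p / t) ≤ M := by
  obtain ⟨k, hk⟩ := exists_nat_ge (-α)
  refine ⟨k.factorial / p ^ k, fun t ⟨ht0, ht1⟩ => ?_⟩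
  -- `exp (p / t) ≥ (p / t) ^ k / k!` beats the pole `t ^ α` since `α + k ≥ 0`
  have hexp : Real.exp (-p / t) ≤ k.factorial / p ^ k * t ^ (k : ℝ) := by
    rw [neg_div, Real.exp_neg, Real.rpow_natCast]
    refine (inv_anti₀ (by positivity)
      (Real.pow_div_factorial_le_exp (p / t) (div_pos hp ht0).le k)).trans_eq ?_
    field_simp
    rw [div_pow, div_mul_cancel₀ _ (by positivity)]
  calc t ^ α * Real.exp (-p / t) ≤ t ^ α * (k.factorial / p ^ k * t ^ (k : ℝ)) := by gcongr
    _ = k.factorial / p ^ k * t ^ (α + k) := by rw [Real.rpow_add ht0]; ring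
    _ ≤ k.factorial / p ^ k :=
        mul_le_of_le_one_right (by positivity) (Real.rpow_le_one ht0.le ht1.le (by linarith))

theorem betaPQ_integrand_nonneg (p q x y : ℝ) {t : ℝ} (ht : t ∈ Ioo (0 : ℝ) 1) :
    0 ≤ t ^ (x - 1) * (1 - t) ^ (y - 1) * Real.exp (-p / t - q / (1 - t)) := by
  have : 0 ≤ 1 - t := by linarith [ht.2]
  have := ht.1.le
  positivity

theorem betaPQ_nonneg (p q x y : ℝ) : 0 ≤ betaPQ p q x y :=
  setIntegral_nonneg measurableSet_Ioo fun _ => betaPQ_integrand_nonneg p q x y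

theorem exists_betaPQ_le {p q : ℝ} (hp : 0 < p) (hq : 0 < q) (x₀ y : ℝ) :
    ∃ M, ∀ x, x₀ ≤ x → betaPQ p q x y ≤ M := by
  obtain ⟨M₁, hM₁⟩ := exists_rpow_mul_exp_neg_div_le (x₀ - 1) hp
  obtain ⟨M₂, hM₂⟩ := exists_rpow_mul_exp_neg_div_le (y - 1) hq
  refine ⟨M₁ * M₂, fun x hx => ?_⟩
  have hle : ∀ t ∈ Ioo (0 : ℝ) 1,
      t ^ (x - 1) * (1 - t) ^ (y - 1) * Real.exp (-p / t - q / (1 - t)) ≤ M₁ * M₂ := by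
    intro t ⟨ht0, ht1⟩
    have h₁ : t ^ (x - 1) * Real.exp (-p / t) ≤ M₁ :=
      (mul_le_mul_of_nonneg_right (Real.rpow_le_rpow_of_exponent_ge ht0 ht1.le (by linarith))
        (Real.exp_pos _).le).trans (hM₁ t ⟨ht0, ht1⟩)
    have h₂ := hM₂ (1 - t) ⟨by linarith, by linarith⟩
    calc t ^ (x - 1) * (1 - t) ^ (y - 1) * Real.exp (-p / t - q / (1 - t))
        = (t ^ (x - 1) * Real.exp (-p / t)) * ((1 - t) ^ (y - 1) * Real.exp (-q / (1 - t))) := by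
          rw [sub_eq_add_neg (-p / t), ← neg_div, Real.exp_add]; ring
      _ ≤ M₁ * M₂ := mul_le_mul h₁ h₂
          (mul_nonneg (Real.rpow_nonneg (by linarith) _) (Real.exp_pos _).le)
          ((mul_nonneg (Real.rpow_nonneg ht0.le _) (Real.exp_pos _).le).trans h₁)
  calc betaPQ p q x y ≤ ∫ _ in Ioo (0 : ℝ) 1, M₁ * M₂ :=
        setIntegral_mono_of_nonneg (fun _ => betaPQ_integrand_nonneg p q x y) hle
          (integrableOn_const (by simp))
    _ = M₁ * M₂ := by simp

theorem Real.Gamma_add_nat_le {ν : ℝ} (hν0 : 0 < ν) (hν1 : ν ≤ 1) (n : ℕ) :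
    Real.Gamma (ν + n) ≤ Real.Gamma ν * n.factorial := by
  induction n with
  | zero => simp
  | succ n ih =>
    have hpos : 0 < ν + n := by positivity
    calc Real.Gamma (ν + (n + 1 : ℕ)) = (ν + n) * Real.Gamma (ν + n) := by
          push_cast; rw [← add_assoc, Real.Gamma_add_one hpos.ne']
      _ ≤ (n + 1) * (Real.Gamma ν * n.factorial) :=
          mul_le_mul (by linarith) ih (Real.Gamma_pos_of_pos hpos).le (by positivity)
      _ = Real.Gamma ν * (n + 1).factorial := by push_cast [Nat.factorial_succ]; ring

theorem integral_rpow_mul_sub_rpow {a b z : ℝ} (ha : 0 < a) (hb : 0 < b) (hz : 0 < z) :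
    ∫ u in Ioo 0 z, u ^ (a - 1) * (z - u) ^ (b - 1) =
      z ^ (a + b - 1) * (Real.Gamma a * Real.Gamma b / Real.Gamma (a + b)) := by
  apply Complex.ofReal_injective
  have hcpow : EqOn (fun u : ℝ => ((u ^ (a - 1) * (z - u) ^ (b - 1) : ℝ) : ℂ))
      (fun u : ℝ => (u : ℂ) ^ ((a : ℂ) - 1) * ((z : ℂ) - u) ^ ((b : ℂ) - 1)) (Ioo 0 z) := by
    intro u hu
    dsimp only
    rw [Complex.ofReal_mul, Complex.ofReal_cpow hu.1.le, Complex.ofReal_cpow (sub_nonneg.2 hu.2.le)]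
    push_cast; rfl
  rw [← integral_complex_ofReal, setIntegral_congr_fun measurableSet_Ioo hcpow,
    ← integral_Ioc_eq_integral_Ioo, ← intervalIntegral.integral_of_le hz.le,
    Complex.betaIntegral_scaled _ _ hz,
    Complex.betaIntegral_eq_Gamma_mul_div _ _ (by simpa) (by simpa)]
  push_cast
  rw [Complex.ofReal_cpow hz.le, ← Complex.Gamma_ofReal, ← Complex.Gamma_ofReal,
    ← Complex.Gamma_ofReal]
  push_cast; rfl

theorem integrableOn_rpow_mul_sub_rpow {a b z : ℝ} (ha : 0 < a) (hb : 0 < b) (hz : 0 < z) :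
    IntegrableOn (fun u => u ^ (a - 1) * (z - u) ^ (b - 1)) (Ioo 0 z) := by
  refine Integrable.of_integral_ne_zero ?_
  rw [integral_rpow_mul_sub_rpow ha hb hz]
  have := Real.Gamma_pos_of_pos ha
  have := Real.Gamma_pos_of_pos hb
  have := Real.Gamma_pos_of_pos (add_pos ha hb)
  positivity

theorem hasSum_rlDeriv_rpow_mul_tsum {ν z : ℝ} (hν0 : 0 < ν) (hν1 : ν < 1) (hz : 0 < z)
    {c : ℕ → ℂ} (hc : Summable fun n => ‖c n‖ * z ^ n) :
    HasSum (fun n => c n * ((Real.Gamma (ν + n) / n.factorial * z ^ n : ℝ) : ℂ))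
      (rlDeriv ν (fun u => ((u ^ (ν - 1) : ℝ) : ℂ) * ∑' n, c n * (u : ℂ) ^ n) z) := by
  set K : ℕ → ℝ → ℝ := fun n u => u ^ (ν + n - 1) * (z - u) ^ (1 - ν - 1)
  have hpos (n : ℕ) : 0 < ν + n := by positivity
  have hν' : 0 < 1 - ν := by linarith
  have hK_nonneg (n : ℕ) {u : ℝ} (hu : u ∈ Ioo 0 z) : 0 ≤ K n u :=
    mul_nonneg (Real.rpow_nonneg hu.1.le _) (Real.rpow_nonneg (by linarith [hu.2]) _)
  have hK (n : ℕ) : ∫ u in Ioo 0 z, K n u =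
      Real.Gamma (1 - ν) * (Real.Gamma (ν + n) / n.factorial * z ^ n) := by
    rw [integral_rpow_mul_sub_rpow (hpos n) hν' hz, show ν + n + (1 - ν) = n + 1 by ring,
      show (n : ℝ) + 1 - 1 = n by ring, Real.rpow_natCast, Real.Gamma_nat_eq_factorial]
    ring
  have hF_int (n : ℕ) : IntegrableOn (fun u => c n * (K n u : ℂ)) (Ioo 0 z) :=
    (integrableOn_rpow_mul_sub_rpow (hpos n) hν' hz).ofReal.const_mul _
  have hF_norm (n : ℕ) : ∫ u in Ioo 0 z, ‖c n * (K n u : ℂ)‖ =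
      ‖c n‖ * (Real.Gamma (1 - ν) * (Real.Gamma (ν + n) / n.factorial * z ^ n)) := by
    rw [← hK n, ← integral_const_mul]
    refine setIntegral_congr_fun measurableSet_Ioo fun u hu => ?_
    rw [norm_mul, Complex.norm_real, Real.norm_of_nonneg (hK_nonneg n hu)]
  have hsum : Summable fun n => ∫ u in Ioo 0 z, ‖c n * (K n u : ℂ)‖ := by
    simp_rw [hF_norm]
    refine Summable.of_nonneg_of_le (fun n => ?_) (fun n => ?_)
      (hc.mul_left (Real.Gamma (1 - ν) * Real.Gamma ν))
    · have := Real.Gamma_pos_of_pos hν'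
      have := Real.Gamma_pos_of_pos (hpos n)
      positivity
    · have hΓ : Real.Gamma (ν + n) / n.factorial ≤ Real.Gamma ν :=
        div_le_of_le_mul₀ (by positivity) (Real.Gamma_pos_of_pos hν0).le
          (Real.Gamma_add_nat_le hν0 hν1.le n)
      have := Real.Gamma_pos_of_pos hν'
      calc ‖c n‖ * (Real.Gamma (1 - ν) * (Real.Gamma (ν + n) / n.factorial * z ^ n))
          ≤ ‖c n‖ * (Real.Gamma (1 - ν) * (Real.Gamma ν * z ^ n)) := by gcongr
        _ = Real.Gamma (1 - ν) * Real.Gamma ν * (‖c n‖ * z ^ n) := by ring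
  have hintegrand : EqOn
      (fun u => (((z - u) ^ (-ν) : ℝ) : ℂ) * (((u ^ (ν - 1) : ℝ) : ℂ) * ∑' n, c n * (u : ℂ) ^ n))
      (fun u => ∑' n, c n * (K n u : ℂ)) (Ioo 0 z) := by
    intro u hu
    simp only [K, ← tsum_mul_left]
    refine tsum_congr fun n => ?_
    rw [show ν + n - 1 = ν - 1 + n by ring, Real.rpow_add hu.1, Real.rpow_natCast,
      show 1 - ν - 1 = -ν by ring]
    push_cast
    ring
  have hΓ : (Real.Gamma (1 - ν) : ℂ) ≠ 0 := by exact_mod_cast (Real.Gamma_pos_of_pos hν').ne'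
  have hterm : (fun n => c n * ((Real.Gamma (ν + n) / n.factorial * z ^ n : ℝ) : ℂ)) =
      fun n => 1 / (Real.Gamma (1 - ν) : ℂ) * ∫ u in Ioo 0 z, c n * (K n u : ℂ) := by
    funext n
    rw [integral_const_mul, integral_complex_ofReal, hK n]
    push_cast
    field_simp
  rw [rlDeriv, setIntegral_congr_fun measurableSet_Ioo hintegrand, hterm]
  exact (hasSum_integral_of_summable_integral_norm hF_int hsum).mul_left _

theorem Complex.norm_le_norm_add_natCast {a : ℂ} (ha : 0 ≤ a.re) (n : ℕ) : ‖a‖ ≤ ‖a + n‖ := by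
  refine (pow_le_pow_iff_left₀ (norm_nonneg _) (norm_nonneg _) two_ne_zero).mp ?_
  simp only [Complex.sq_norm, Complex.normSq_apply, Complex.add_re, Complex.add_im,
    Complex.natCast_re, Complex.natCast_im, add_zero]
  nlinarith [n.cast_nonneg (α := ℝ)]

theorem hasSum_rlDeriv_hurwitzPhi_two {τ ω p q ν z : ℝ} (hp : 0 < p) (hq : 0 < q)
    (hν0 : 0 < ν) (hν1 : ν < 1) (hz : z ∈ Ioo (0 : ℝ) 1) {a : ℂ} (ha0 : a ≠ 0) (ha : 0 ≤ a.re) :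
    HasSum (fun n : ℕ => (betaPQ p q (τ + n) (ω - τ) : ℂ) / (betaE τ (ω - τ) * (a + n) ^ 2) *
        ((Real.Gamma (ν + n) / n.factorial * z ^ n : ℝ) : ℂ))
      (rlDeriv ν (fun u => ((u ^ (ν - 1) : ℝ) : ℂ) * hurwitzPhi τ ω p q u 2 a) z) := by
  set c : ℕ → ℂ := fun n => (betaPQ p q (τ + n) (ω - τ) : ℂ) / (betaE τ (ω - τ) * (a + n) ^ 2)
  have hPhi (u : ℝ) : hurwitzPhi τ ω p q u 2 a = ∑' n, c n * (u : ℂ) ^ n :=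
    tsum_congr fun n => by rw [Complex.cpow_ofNat]; ring
  obtain ⟨M, hM⟩ := exists_betaPQ_le hp hq τ (ω - τ)
  have hM0 : 0 ≤ M := (betaPQ_nonneg p q τ (ω - τ)).trans (hM τ le_rfl)
  have hc_le (n : ℕ) : ‖c n‖ ≤ M / ‖(betaE τ (ω - τ) : ℂ)‖ * (‖a‖ ^ 2)⁻¹ := by
    rw [norm_div, norm_mul, norm_pow, ← div_div, div_eq_mul_inv _ (_ ^ 2), Complex.norm_real,
      Real.norm_of_nonneg (betaPQ_nonneg _ _ _ _)]
    exact mul_le_mul (div_le_div_of_nonneg_right (hM _ (by simp)) (norm_nonneg _))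
      (inv_anti₀ (by positivity) (pow_le_pow_left₀ (norm_nonneg _)
        (Complex.norm_le_norm_add_natCast ha n) 2)) (by positivity) (by positivity)
  simp_rw [hPhi]
  refine hasSum_rlDeriv_rpow_mul_tsum hν0 hν1 hz.1 (Summable.of_nonneg_of_le
    (fun n => mul_nonneg (norm_nonneg _) (pow_nonneg hz.1.le n))
    (fun n => mul_le_mul_of_nonneg_right (hc_le n) (pow_nonneg hz.1.le n))
    ((summable_geometric_of_lt_one hz.1.le hz.2).mul_left _))

theorem one_div_sq_sub_one_div_sq {r : ℝ} (hr : r ≠ 0) (x : ℝ) :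
    1 / (-(r : ℂ) * Complex.I + x) ^ 2 - 1 / ((r : ℂ) * Complex.I + x) ^ 2 =
      4 * Complex.I * r * x / ((x : ℂ) ^ 2 + (r : ℂ) ^ 2) ^ 2 := by
  have hprod :
      ((r : ℂ) * Complex.I + x) * (-(r : ℂ) * Complex.I + x) = (x : ℂ) ^ 2 + (r : ℂ) ^ 2 := by
    linear_combination (-(r : ℂ) ^ 2) * Complex.I_sq
  have hsum : (x : ℂ) ^ 2 + (r : ℂ) ^ 2 ≠ 0 := by
    exact_mod_cast (by positivity : x ^ 2 + r ^ 2 ≠ 0)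
  have h1 : -(r : ℂ) * Complex.I + x ≠ 0 := right_ne_zero_of_mul (hprod ▸ hsum)
  have h2 : (r : ℂ) * Complex.I + x ≠ 0 := left_ne_zero_of_mul (hprod ▸ hsum)
  rw [div_sub_div _ _ (pow_ne_zero 2 h1) (pow_ne_zero 2 h2), ← mul_pow,
    mul_comm (-(r : ℂ) * Complex.I + x), hprod]
  ring

theorem statement9_general (r τ ω p q ν z : ℝ)
    (hr : 0 < r) (hp : 0 < p) (hq : 0 < q) (hν0 : 0 < ν) (hν1 : ν < 1)
    (hz : z ∈ Ioo (0:ℝ) 1) :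
    ((∑' k : ℕ, 2 * ((k : ℝ) + 1) * poch ν (k + 1) *
        betaPQ p q (τ + ((k : ℝ) + 1)) (ω - τ) * z ^ (k + 1) /
        ((Nat.factorial (k + 1) : ℝ) * betaE τ (ω - τ) *
          (((k : ℝ) + 1) ^ 2 + r ^ 2) ^ 2) : ℝ) : ℂ) =
      (1 / (2 * Complex.I * (r : ℂ) * (Real.Gamma ν : ℂ))) *
        (rlDeriv ν
            (fun u => ((u ^ (ν - 1) : ℝ) : ℂ) *
              hurwitzPhi τ ω p q u 2 (-(r : ℂ) * Complex.I)) z -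
          rlDeriv ν
            (fun u => ((u ^ (ν - 1) : ℝ) : ℂ) *
              hurwitzPhi τ ω p q u 2 ((r : ℂ) * Complex.I)) z) := by
  have hr' : (r : ℂ) ≠ 0 := by exact_mod_cast hr.ne'
  have hminus := hasSum_rlDeriv_hurwitzPhi_two (τ := τ) (ω := ω) hp hq hν0 hν1 hz
    (a := -(r : ℂ) * Complex.I) (by simpa using hr') (by simp)
  have hplus := hasSum_rlDeriv_hurwitzPhi_two (τ := τ) (ω := ω) hp hq hν0 hν1 hz
    (a := (r : ℂ) * Complex.I) (by simpa using hr') (by simp)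
  have hsum := (hminus.sub hplus).mul_left (1 / (2 * Complex.I * r * Real.Gamma ν))
  rw [← hsum.tsum_eq, hsum.summable.tsum_eq_zero_add, Complex.ofReal_tsum]
  convert (zero_add _).symm using 2
  · simp
  · refine tsum_congr fun k => ?_
    have h := one_div_sq_sub_one_div_sq hr.ne' ((k + 1 : ℕ) : ℝ)
    push_cast at h ⊢
    have hΓ : (Real.Gamma ν : ℂ) ≠ 0 := by exact_mod_cast (Real.Gamma_pos_of_pos hν0).ne'
    rw [poch]
    push_cast
    linear_combination (norm := skip) 1 / (2 * Complex.I * r * Real.Gamma ν) *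
      (betaPQ p q (τ + (k + 1)) (ω - τ) / betaE τ (ω - τ) *
        (Real.Gamma (ν + (k + 1)) / (k + 1).factorial * z ^ (k + 1))) * h
    field_simp
    ring

theorem statement9 (r τ ω p q ν z : ℝ)
    (hr : 0 < r) (hτ : 0 < τ) (hω : 0 < ω) (hτω : τ < ω)
    (hp : 0 < p) (hq : 0 < q) (hν0 : 0 < ν) (hν1 : ν < 1)
    (hz : z ∈ Ioo (0:ℝ) 1) :
    ((∑' k : ℕ, 2 * ((k : ℝ) + 1) * poch ν (k + 1) *
        betaPQ p q (τ + ((k : ℝ) + 1)) (ω - τ) * z ^ (k + 1) /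
        ((Nat.factorial (k + 1) : ℝ) * betaE τ (ω - τ) *
          (((k : ℝ) + 1) ^ 2 + r ^ 2) ^ 2) : ℝ) : ℂ) =
      (1 / (2 * Complex.I * (r : ℂ) * (Real.Gamma ν : ℂ))) *
        (rlDeriv ν
            (fun u => ((u ^ (ν - 1) : ℝ) : ℂ) *
              hurwitzPhi τ ω p q u 2 (-(r : ℂ) * Complex.I)) z -
          rlDeriv ν
            (fun u => ((u ^ (ν - 1) : ℝ) : ℂ) *
              hurwitzPhi τ ω p q u 2 ((r : ℂ) * Complex.I)) z) :=
  statement9_general r τ ω p q ν z hr hp hq hν0 hν1 hz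
end

section
/- Let r, ν, μ, τ, ω > 0 with ω > τ, let p, q > 0, and let z be real with |z| ≤ 1. Then S_{μ,ν,τ,ω}^{(2,1)}(r; {k}; p,q; z) = (1/(2ir)) [ Φ_{ν,τ,ω}(z, μ, −ir; p,q) − Φ_{ν,τ,ω}(z, μ, ir; p,q) ] in the case μ = 2; explicitly, Σ_{k=1}^∞ 2k (ν)_k B_{p,q}(τ+k, ω−τ) z^k / (k! B(τ, ω−τ)(k² + r²)²) = (1/(2ir)) Σ_{n=0}^∞ ((ν)_n/n!) (B_{p,q}(τ+n, ω−τ)/B(τ, ω−τ)) z^n [ (n−ir)^{−2} − (n+ir)^{−2} ]. -/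
open Real MeasureTheory Set Filter

/-!
The two Hurwitz–Lerch series share their coefficients, so the claim is termwise the partial
fraction identity `(1 / (2 i r)) ((n - i r)⁻² - (n + i r)⁻²) = 2 n / (n² + r²)²`; its `n = 0`
term vanishes, which shifts the index to `k = n - 1`. Neither step needs convergence: pulling
out a constant factor and reindexing along an injection are valid for `tsum` unconditionally.
-/

theorem tsum_add_one_eq_tsum_of_apply_zero {α : Type*} [AddCommMonoid α] [TopologicalSpace α]
    {f : ℕ → α} (hf : f 0 = 0) : ∑' k, f (k + 1) = ∑' n, f n := by
  refine Nat.succ_injective.tsum_eq fun n hn ↦ ?_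
  obtain _ | k := n
  · exact absurd hf hn
  · exact ⟨k, rfl⟩

theorem Complex.cpow_neg_two (w : ℂ) : w ^ (-2 : ℂ) = (w ^ 2)⁻¹ := by
  rw [show (-2 : ℂ) = ((-2 : ℤ) : ℂ) by norm_num, Complex.cpow_intCast, zpow_neg, zpow_two, sq]

theorem one_div_two_I_mul_cpow_neg_two_sub_cpow_neg_two {r : ℝ} (hr : r ≠ 0) (x : ℝ) :
    1 / (2 * Complex.I * r) * ((x - r * Complex.I) ^ (-2 : ℂ) - (x + r * Complex.I) ^ (-2 : ℂ))
      = ((2 * x / (x ^ 2 + r ^ 2) ^ 2 : ℝ) : ℂ) := by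
  have hconj : ((x : ℂ) - r * Complex.I) * (x + r * Complex.I) = ((x ^ 2 + r ^ 2 : ℝ) : ℂ) := by
    push_cast
    linear_combination (-(r : ℂ) ^ 2) * Complex.I_sq
  have hnorm : ((x ^ 2 + r ^ 2 : ℝ) : ℂ) ≠ 0 := by
    have : 0 < x ^ 2 + r ^ 2 := by positivity
    exact_mod_cast this.ne'
  have hminus : (x : ℂ) - r * Complex.I ≠ 0 := left_ne_zero_of_mul (hconj ▸ hnorm)
  have hplus : (x : ℂ) + r * Complex.I ≠ 0 := right_ne_zero_of_mul (hconj ▸ hnorm)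
  have hrC : (r : ℂ) ≠ 0 := Complex.ofReal_ne_zero.mpr hr
  rw [Complex.cpow_neg_two, Complex.cpow_neg_two, inv_sub_inv (pow_ne_zero 2 hminus)
    (pow_ne_zero 2 hplus), ← mul_pow, hconj]
  push_cast at hnorm ⊢
  field_simp
  ring

theorem statement10_general (r ν τ ω p q z : ℝ)
    (hr : 0 < r) :
    ((∑' k : ℕ, 2 * ((k : ℝ) + 1) * poch ν (k + 1) *
        betaPQ p q (τ + ((k : ℝ) + 1)) (ω - τ) * z ^ (k + 1) /
        ((Nat.factorial (k + 1) : ℝ) * betaE τ (ω - τ) *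
          (((k : ℝ) + 1) ^ 2 + r ^ 2) ^ 2) : ℝ) : ℂ) =
      (1 / (2 * Complex.I * (r : ℂ))) *
        ∑' n : ℕ, ((poch ν n / (Nat.factorial n : ℝ) *
            (betaPQ p q (τ + (n : ℝ)) (ω - τ) / betaE τ (ω - τ)) * z ^ n : ℝ) : ℂ) *
          (((n : ℂ) - (r : ℂ) * Complex.I) ^ (-2 : ℂ) -
            ((n : ℂ) + (r : ℂ) * Complex.I) ^ (-2 : ℂ)) := by
  set c : ℕ → ℝ := fun n ↦ poch ν n / (Nat.factorial n : ℝ) *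
    (betaPQ p q (τ + (n : ℝ)) (ω - τ) / betaE τ (ω - τ)) * z ^ n
  set f : ℕ → ℝ := fun n ↦ c n * (2 * n / ((n : ℝ) ^ 2 + r ^ 2) ^ 2)
  have hterm (n : ℕ) : 1 / (2 * Complex.I * r) * ((c n : ℂ) *
      ((n - r * Complex.I) ^ (-2 : ℂ) - (n + r * Complex.I) ^ (-2 : ℂ))) = (f n : ℂ) := by
    rw [mul_left_comm, ← Complex.ofReal_natCast,
      one_div_two_I_mul_cpow_neg_two_sub_cpow_neg_two hr.ne', ← Complex.ofReal_mul]
  rw [← tsum_mul_left, tsum_congr hterm, ← Complex.ofReal_tsum,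
    ← tsum_add_one_eq_tsum_of_apply_zero (f := f) (by simp [f])]
  congr 1
  refine tsum_congr fun k ↦ ?_
  simp only [f, c]
  push_cast
  field_simp

theorem statement10 (r ν μ τ ω p q z : ℝ)
    (hr : 0 < r) (hν : 0 < ν) (hμ : 0 < μ) (hτ : 0 < τ) (hω : 0 < ω) (hτω : τ < ω)
    (hp : 0 < p) (hq : 0 < q) (hz : |z| ≤ 1) :
    ((∑' k : ℕ, 2 * ((k : ℝ) + 1) * poch ν (k + 1) *
        betaPQ p q (τ + ((k : ℝ) + 1)) (ω - τ) * z ^ (k + 1) /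
        ((Nat.factorial (k + 1) : ℝ) * betaE τ (ω - τ) *
          (((k : ℝ) + 1) ^ 2 + r ^ 2) ^ 2) : ℝ) : ℂ) =
      (1 / (2 * Complex.I * (r : ℂ))) *
        ∑' n : ℕ, ((poch ν n / (Nat.factorial n : ℝ) *
            (betaPQ p q (τ + (n : ℝ)) (ω - τ) / betaE τ (ω - τ)) * z ^ n : ℝ) : ℂ) *
          (((n : ℂ) - (r : ℂ) * Complex.I) ^ (-2 : ℂ) -
            ((n : ℂ) + (r : ℂ) * Complex.I) ^ (-2 : ℂ)) :=
  statement10_general r ν τ ω p q z hr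
end

section
/- Let λ, τ, ω, θ, σ, δ > 0 with ω > τ, and let p, q ≥ 0. Then for every real z the (p,q)-Mittag-Leffler function has the integral representation E_{δ,θ,σ; p,q}^{(λ, τ, ω)}(z) = (1/B(τ, ω−τ)) ∫₀¹ t^{τ−1} (1−t)^{ω−τ−1} exp(−p/t − q/(1−t)) E_{δ,θ,σ}^{(λ)}(zt) dt. -/
/-!
Writing `B_{p,q}(τ + k, ω - τ)` as an integral turns the series for `E_{p,q}` into a series of
integrals of the kernel of `B_{p,q}(τ, ω - τ)` against `c_k (z t)^k`, where `c_k` are the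
coefficients of `E^{(λ)}`. Log-convexity of `Γ` gives `Γ(x + θ) ≥ Γ(x) (x - 1)^θ`, hence
`c_{k+1} / c_k → 0` and `∑ |c_k z^k|` converges; since the kernel is dominated by the Euler beta
integrand, the series of integrals converges absolutely and sum and integral may be swapped.
-/

open Real MeasureTheory Set Filter

/-- The `(p,q)`-Mittag-Leffler function `E_{δ,θ,σ;p,q}^{(lam,τ,ω)}(z)`. -/
noncomputable def mlPQ (δ θ σ lam τ ω p q z : ℝ) : ℝ :=
  ∑' k : ℕ, poch lam k * betaPQ p q (τ + (k : ℝ)) (ω - τ) * z ^ k /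
    (Real.Gamma (θ * (k : ℝ) + σ) ^ δ * betaE τ (ω - τ) * (Nat.factorial k : ℝ))

/-- Generalized Mittag-Leffler function `E_{δ,θ,σ}^{(lam)}(w)`. -/
noncomputable def mlGen (δ θ σ lam w : ℝ) : ℝ :=
  ∑' k : ℕ, poch lam k * w ^ k / (Real.Gamma (θ * (k : ℝ) + σ) ^ δ * (Nat.factorial k : ℝ))

open Topology

theorem Real.Gamma_mul_rpow_le_Gamma_add {x θ : ℝ} (hx : 1 < x) (hθ : 0 < θ) :
    Gamma x * (x - 1) ^ θ ≤ Gamma (x + θ) := by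
  have hx₁ : 0 < x - 1 := by linarith
  have hΓ : 0 < Gamma x := Gamma_pos_of_pos (by linarith)
  -- log-convexity of `Gamma`: the slope on `[x - 1, x]`, which is `log (x - 1)`, is at most
  -- the slope on `[x, x + θ]`
  have hslope := convexOn_log_Gamma.slope_mono_adjacent (x := x - 1) (y := x) (z := x + θ)
    (mem_Ioi.2 hx₁) (mem_Ioi.2 (by linarith)) (by linarith) (by linarith)
  have hlog : log (Gamma x) - log (Gamma (x - 1)) = log (x - 1) := by
    rw [← sub_add_cancel x 1, Gamma_add_one hx₁.ne', sub_add_cancel,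
      log_mul hx₁.ne' (Gamma_pos_of_pos hx₁).ne']
    ring
  simp only [Function.comp, sub_sub_cancel, add_sub_cancel_left, div_one, hlog] at hslope
  calc Gamma x * (x - 1) ^ θ = exp (log (Gamma x) + θ * log (x - 1)) := by
        rw [exp_add, exp_log hΓ, rpow_def_of_pos hx₁, mul_comm θ]
    _ ≤ exp (log (Gamma (x + θ))) := by
        gcongr
        linarith [(le_div_iff₀' hθ).1 hslope]
    _ = Gamma (x + θ) := exp_log (Gamma_pos_of_pos (by linarith))

theorem Real.Gamma_rpow_div_Gamma_add_rpow_le {x θ δ : ℝ} (hx : 1 < x) (hθ : 0 < θ)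
    (hδ : 0 ≤ δ) : Gamma x ^ δ / Gamma (x + θ) ^ δ ≤ (x - 1) ^ (-(θ * δ)) := by
  have hx₁ : 0 < x - 1 := by linarith
  have h := rpow_le_rpow (by have := Gamma_pos_of_pos (by linarith : 0 < x); positivity)
    (Gamma_mul_rpow_le_Gamma_add hx hθ) hδ
  rw [mul_rpow (Gamma_pos_of_pos (by linarith)).le (by positivity), ← rpow_mul hx₁.le] at h
  rw [rpow_neg hx₁.le, div_le_iff₀ (rpow_pos_of_pos (Gamma_pos_of_pos (by linarith)) _),
    ← div_eq_inv_mul, le_div_iff₀ (by positivity)]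
  exact h

lemma poch_pos {a : ℝ} (ha : 0 < a) (n : ℕ) : 0 < poch a n :=
  div_pos (Real.Gamma_pos_of_pos (by positivity)) (Real.Gamma_pos_of_pos ha)

lemma poch_succ {a : ℝ} (n : ℕ) (h : a + n ≠ 0) : poch a (n + 1) = (a + n) * poch a n := by
  rw [poch, poch, Nat.cast_succ, ← add_assoc, Real.Gamma_add_one h, mul_div_assoc]

noncomputable def mlGenCoeff (δ θ σ lam : ℝ) (k : ℕ) : ℝ :=
  poch lam k / (Real.Gamma (θ * k + σ) ^ δ * k.factorial)

lemma mlGen_eq_tsum (δ θ σ lam w : ℝ) :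
    mlGen δ θ σ lam w = ∑' k, mlGenCoeff δ θ σ lam k * w ^ k :=
  tsum_congr fun _ ↦ div_mul_eq_mul_div _ _ _ |>.symm

section Coeff

variable {δ θ σ lam : ℝ} (hlam : 0 < lam) (hθ : 0 < θ) (hσ : 0 < σ)
include hlam hθ hσ

lemma mlGenCoeff_pos (k : ℕ) : 0 < mlGenCoeff δ θ σ lam k :=
  div_pos (poch_pos hlam k)
    (mul_pos (Real.rpow_pos_of_pos (Real.Gamma_pos_of_pos (by positivity)) _) (by positivity))

lemma mlGenCoeff_succ_div (k : ℕ) :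
    mlGenCoeff δ θ σ lam (k + 1) / mlGenCoeff δ θ σ lam k =
      (lam + k) / (k + 1) *
        (Real.Gamma (θ * k + σ) ^ δ / Real.Gamma (θ * k + σ + θ) ^ δ) := by
  have hΓ : 0 < Real.Gamma (θ * k + σ) ^ δ :=
    Real.rpow_pos_of_pos (Real.Gamma_pos_of_pos (by positivity)) _
  have hpoch := poch_pos hlam k
  rw [mlGenCoeff, mlGenCoeff, poch_succ k (by positivity), Nat.factorial_succ]
  push_cast
  rw [show θ * (k + 1) + σ = θ * k + σ + θ by ring]
  field_simp

lemma tendsto_mlGenCoeff_succ_div (hδ : 0 < δ) :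
    Tendsto (fun k ↦ mlGenCoeff δ θ σ lam (k + 1) / mlGenCoeff δ θ σ lam k) atTop (𝓝 0) := by
  have hx : Tendsto (fun k : ℕ ↦ θ * k + σ) atTop atTop :=
    tendsto_atTop_add_const_right _ σ (tendsto_natCast_atTop_atTop.const_mul_atTop hθ)
  have hbound : Tendsto (fun k : ℕ ↦ (lam + 1) * (θ * k + σ - 1) ^ (-(θ * δ))) atTop (𝓝 0) := by
    simpa [← sub_eq_add_neg] using ((tendsto_rpow_neg_atTop (by positivity)).comp
      (tendsto_atTop_add_const_right _ (-1) hx)).const_mul (lam + 1)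
  refine squeeze_zero' (.of_forall fun k ↦ (div_pos (mlGenCoeff_pos hlam hθ hσ _)
    (mlGenCoeff_pos hlam hθ hσ _)).le) ?_ hbound
  filter_upwards [hx.eventually_ge_atTop 2] with k hk
  rw [mlGenCoeff_succ_div hlam hθ hσ]
  have hk0 : (0 : ℝ) ≤ k := k.cast_nonneg
  refine mul_le_mul ?_ (Real.Gamma_rpow_div_Gamma_add_rpow_le (by linarith) hθ hδ.le)
    (by positivity) (by positivity)
  rw [div_le_iff₀ (by positivity)]
  nlinarith

lemma summable_mlGenCoeff_mul_pow (hδ : 0 < δ) (w : ℝ) :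
    Summable fun k ↦ mlGenCoeff δ θ σ lam k * w ^ k := by
  rcases eq_or_ne w 0 with rfl | hw
  · exact summable_of_ne_finset_zero (s := {0}) fun k hk ↦ by simp_all
  refine summable_of_ratio_test_tendsto_lt_one zero_lt_one
    (.of_forall fun k ↦ mul_ne_zero (mlGenCoeff_pos hlam hθ hσ k).ne' (pow_ne_zero k hw)) ?_
  have hpos := fun k ↦ mlGenCoeff_pos (δ := δ) hlam hθ hσ k
  convert (tendsto_mlGenCoeff_succ_div hlam hθ hσ hδ).const_mul ‖w‖ using 2 with k
  · have := pow_pos (norm_pos_iff.2 hw) k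
    simp only [norm_mul, norm_pow, Real.norm_of_nonneg (hpos _).le, pow_succ]
    field_simp
  · simp

end Coeff

noncomputable def betaPQKernel (p q x y t : ℝ) : ℝ :=
  t ^ (x - 1) * (1 - t) ^ (y - 1) * Real.exp (-p / t - q / (1 - t))

lemma integrableOn_rpow_mul_one_sub_rpow {x y : ℝ} (hx : 0 < x) (hy : 0 < y) :
    IntegrableOn (fun t : ℝ ↦ t ^ (x - 1) * (1 - t) ^ (y - 1)) (Ioo 0 1) := by
  have h : IntegrableOn _ (Ioc (0 : ℝ) 1) :=
    (Complex.betaIntegral_convergent (u := x) (v := y) (by simpa) (by simpa)).1.norm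
  refine (h.mono_set Ioo_subset_Ioc_self).congr_fun (fun t ht ↦ ?_) measurableSet_Ioo
  have ht₀ : 0 ≤ t := ht.1.le
  have h1t : 0 ≤ 1 - t := by linarith [ht.2]
  have hcast : ((t ^ (x - 1) * (1 - t) ^ (y - 1) : ℝ) : ℂ) =
      (t : ℂ) ^ ((x : ℂ) - 1) * (1 - (t : ℂ)) ^ ((y : ℂ) - 1) := by
    push_cast [Complex.ofReal_cpow ht₀, Complex.ofReal_cpow h1t]
    rfl
  simp only []
  rw [← hcast, Complex.norm_real, Real.norm_of_nonneg (by positivity)]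

lemma continuousOn_betaPQKernel (p q x y : ℝ) : ContinuousOn (betaPQKernel p q x y) (Ioo 0 1) := by
  intro t ⟨ht₀, ht₁⟩
  have h1t : 1 - t ≠ 0 := by linarith
  unfold betaPQKernel
  fun_prop (disch := first | exact ht₀.ne' | exact h1t | left; exact ht₀.ne' | left; exact h1t)

lemma abs_betaPQKernel_le {p q : ℝ} (hp : 0 ≤ p) (hq : 0 ≤ q) (x y : ℝ) {t : ℝ}
    (ht : t ∈ Ioo (0 : ℝ) 1) : |betaPQKernel p q x y t| ≤ t ^ (x - 1) * (1 - t) ^ (y - 1) := by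
  obtain ⟨ht₀, ht₁⟩ := ht
  have h1t : 0 < 1 - t := by linarith
  have hexp : Real.exp (-p / t - q / (1 - t)) ≤ 1 := by
    rw [Real.exp_le_one_iff, neg_div]
    linarith [div_nonneg hp ht₀.le, div_nonneg hq h1t.le]
  rw [betaPQKernel, abs_of_nonneg (by positivity)]
  exact mul_le_of_le_one_right (by positivity) hexp

lemma betaPQKernel_mul_pow (p q x y : ℝ) (k : ℕ) {t : ℝ} (ht : 0 < t) :
    betaPQKernel p q x y t * t ^ k = betaPQKernel p q (x + k) y t := by
  rw [betaPQKernel, betaPQKernel, add_sub_right_comm, Real.rpow_add ht, Real.rpow_natCast]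
  ring

lemma integral_betaPQKernel_mul_tsum {p q x y : ℝ} (hp : 0 ≤ p) (hq : 0 ≤ q) (hx : 0 < x)
    (hy : 0 < y) {a : ℕ → ℝ} (ha : Summable fun k ↦ |a k|) :
    ∫ t in Ioo 0 1, betaPQKernel p q x y t * ∑' k, a k * t ^ k =
      ∑' k, a k * betaPQ p q (x + k) y := by
  set F : ℕ → ℝ → ℝ := fun k t ↦ a k * (betaPQKernel p q x y t * t ^ k)
  have hβ := integrableOn_rpow_mul_one_sub_rpow hx hy
  have hF_le : ∀ k, ∀ t ∈ Ioo (0 : ℝ) 1, ‖F k t‖ ≤ |a k| * (t ^ (x - 1) * (1 - t) ^ (y - 1)) := by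
    intro k t ht
    rw [Real.norm_eq_abs, abs_mul, abs_mul, abs_pow, abs_of_pos ht.1]
    have hpow : t ^ k ≤ 1 := pow_le_one₀ ht.1.le ht.2.le
    refine mul_le_mul_of_nonneg_left ?_ (abs_nonneg _)
    calc |betaPQKernel p q x y t| * t ^ k ≤ |betaPQKernel p q x y t| :=
          mul_le_of_le_one_right (abs_nonneg _) hpow
      _ ≤ _ := abs_betaPQKernel_le hp hq x y ht
  have hF_int : ∀ k, IntegrableOn (F k) (Ioo 0 1) := fun k ↦
    (hβ.const_mul |a k|).mono' ((continuousOn_const.mul ((continuousOn_betaPQKernel p q x y).mul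
      (continuous_pow k).continuousOn)).aestronglyMeasurable measurableSet_Ioo)
      ((ae_restrict_iff' measurableSet_Ioo).2 (.of_forall (hF_le k)))
  have hF_sum : Summable fun k ↦ ∫ t in Ioo 0 1, ‖F k t‖ := by
    refine .of_nonneg_of_le (fun k ↦ integral_nonneg fun t ↦ norm_nonneg _) (fun k ↦ ?_)
      (ha.mul_right (∫ t in Ioo 0 1, t ^ (x - 1) * (1 - t) ^ (y - 1)))
    rw [← integral_const_mul]
    exact setIntegral_mono_on (hF_int k).norm (hβ.const_mul _) measurableSet_Ioo (hF_le k)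
  have hF_integral : ∀ k, ∫ t in Ioo 0 1, F k t = a k * betaPQ p q (x + k) y := fun k ↦ by
    rw [integral_const_mul, betaPQ]
    exact congrArg _ (setIntegral_congr_fun measurableSet_Ioo fun t ht ↦
      betaPQKernel_mul_pow p q x y k ht.1)
  calc ∫ t in Ioo 0 1, betaPQKernel p q x y t * ∑' k, a k * t ^ k
      = ∫ t in Ioo 0 1, ∑' k, F k t := by
        congr! 2 with t
        rw [← tsum_mul_left]
        exact tsum_congr fun k ↦ by ring
    _ = ∑' k, ∫ t in Ioo 0 1, F k t := (integral_tsum_of_summable_integral_norm hF_int hF_sum).symm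
    _ = ∑' k, a k * betaPQ p q (x + k) y := tsum_congr hF_integral

theorem statement16_general (lam τ ω θ σ δ p q : ℝ)
    (hlam : 0 < lam) (hτ : 0 < τ) (hθ : 0 < θ) (hσ : 0 < σ) (hδ : 0 < δ)
    (hτω : τ < ω) (hp : 0 ≤ p) (hq : 0 ≤ q) (z : ℝ) :
    mlPQ δ θ σ lam τ ω p q z =
      (1 / betaE τ (ω - τ)) *
        ∫ t in Ioo (0:ℝ) 1, t ^ (τ - 1) * (1 - t) ^ (ω - τ - 1) *
          Real.exp (-p / t - q / (1 - t)) * mlGen δ θ σ lam (z * t) := by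
  set c := mlGenCoeff δ θ σ lam
  have hc : Summable fun k ↦ |c k * z ^ k| := (summable_mlGenCoeff_mul_pow hlam hθ hσ hδ z).abs
  calc mlPQ δ θ σ lam τ ω p q z
      = 1 / betaE τ (ω - τ) * ∑' k, c k * z ^ k * betaPQ p q (τ + k) (ω - τ) := by
        rw [mlPQ, ← tsum_mul_left]
        exact tsum_congr fun k ↦ by simp only [c, mlGenCoeff]; ring
    _ = _ := by
        rw [← integral_betaPQKernel_mul_tsum hp hq hτ (sub_pos.2 hτω) hc]
        refine congrArg _ (setIntegral_congr_fun measurableSet_Ioo fun t _ ↦ ?_)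
        rw [mlGen_eq_tsum]
        exact congrArg _ (tsum_congr fun k ↦ by ring)

theorem statement16 (lam τ ω θ σ δ p q : ℝ)
    (hlam : 0 < lam) (hτ : 0 < τ) (hω : 0 < ω) (hθ : 0 < θ) (hσ : 0 < σ) (hδ : 0 < δ)
    (hτω : τ < ω) (hp : 0 ≤ p) (hq : 0 ≤ q) (z : ℝ) :
    mlPQ δ θ σ lam τ ω p q z =
      (1 / betaE τ (ω - τ)) *
        ∫ t in Ioo (0:ℝ) 1, t ^ (τ - 1) * (1 - t) ^ (ω - τ - 1) *
          Real.exp (-p / t - q / (1 - t)) * mlGen δ θ σ lam (z * t) :=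
  statement16_general lam τ ω θ σ δ p q hlam hτ hθ hσ hδ hτω hp hq z
end
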